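/- arXiv:2507.09837 — 3 statements merged into one kernel-verified Lean document; each statement's English description precedes it below -/
import Mathlib

section
/- Let x, t, y, z₁, z₂ be random variables with finite ranges on a probability space, with joint distribution p(x,t,y). Assume z₁ is a representation of (x,t), i.e. the conditional mutual information I(z₁; y | x,t) = 0, and z₁ is a sufficient representation of x with side-channel information t for y, i.e. I((x,t); y | z₁) = 0. Assume z₂ is a representation of x, i.e. I(z₂; y | x) = 0, and z₂ is a sufficient representation of x for y, i.e. I(x; y | z₂) = 0. Then the mutual information between z₁ and y is at least that between z₂ and y: I(z₁; y) ≥ I(z₂; y). -/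
/-!
A representation `z` of `u` that is sufficient for `y` carries exactly the information that `u`
carries about `y`: by the chain rule, `I((u, z); y)` equals both `I(u; y) + I(z; y | u)` and
`I(z; y) + I(u; y | z)`, and both conditional terms vanish. Hence `I(z₁; y) = I((x, t); y)` and
`I(z₂; y) = I(x; y)`, while `I((x, t); y) = I(x; y) + I(t; y | x) ≥ I(x; y)` because conditional
mutual information is nonnegative, which is Gibbs' inequality (`log s ≤ s - 1`) applied fibrewise
against the product of the conditional marginals.
-/

open MeasureTheory ProbabilityTheory

/-- Shannon entropy of a finite-valued random variable `X` under measure `μ`. -/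
noncomputable def entropy {Ω : Type*} [MeasurableSpace Ω] {α : Type*} [Fintype α]
    [MeasurableSpace α] (μ : Measure Ω) (X : Ω → α) : ℝ :=
  - ∑ a : α, (μ (X ⁻¹' {a})).toReal * Real.log (μ (X ⁻¹' {a})).toReal

/-- Conditional entropy `H(X | Y) = H(X, Y) - H(Y)`. -/
noncomputable def condEntropy {Ω : Type*} [MeasurableSpace Ω] {α β : Type*}
    [Fintype α] [MeasurableSpace α] [Fintype β] [MeasurableSpace β]
    (μ : Measure Ω) (X : Ω → α) (Y : Ω → β) : ℝ :=
  entropy μ (fun ω => (X ω, Y ω)) - entropy μ Y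

/-- Mutual information `I(X; Y) = H(X) - H(X | Y)`. -/
noncomputable def mutualInfo {Ω : Type*} [MeasurableSpace Ω] {α β : Type*}
    [Fintype α] [MeasurableSpace α] [Fintype β] [MeasurableSpace β]
    (μ : Measure Ω) (X : Ω → α) (Y : Ω → β) : ℝ :=
  entropy μ X - condEntropy μ X Y

/-- Conditional mutual information `I(X; Y | W) = H(X | W) - H(X | (Y, W))`. -/
noncomputable def condMutualInfo {Ω : Type*} [MeasurableSpace Ω] {α β γ : Type*}
    [Fintype α] [MeasurableSpace α] [Fintype β] [MeasurableSpace β]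
    [Fintype γ] [MeasurableSpace γ]
    (μ : Measure Ω) (X : Ω → α) (Y : Ω → β) (W : Ω → γ) : ℝ :=
  condEntropy μ X W - condEntropy μ X (fun ω => (Y ω, W ω))

open Real Finset

section Identities

variable {Ω α β γ : Type*} [MeasurableSpace Ω] (μ : Measure Ω)
  [Fintype α] [MeasurableSpace α] [Fintype β] [MeasurableSpace β]
  [Fintype γ] [MeasurableSpace γ]

lemma entropy_comp_of_injective (X : Ω → α) {e : α → β} (he : Function.Injective e) :
    entropy μ (fun ω => e (X ω)) = entropy μ X := by
  classical
  have hfiber : ∀ a, (fun ω => e (X ω)) ⁻¹' {e a} = X ⁻¹' {a} := fun a => by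
    ext ω; simp [he.eq_iff]
  have hempty : ∀ b ∉ univ.image e, (fun ω => e (X ω)) ⁻¹' {b} = ∅ := fun b hb => by
    ext ω
    simpa using fun h : e (X ω) = b => hb (h ▸ mem_image_of_mem e (mem_univ _))
  unfold entropy
  rw [← sum_subset (subset_univ (univ.image e)) fun b _ hb => by simp [hempty b hb],
    sum_image fun a _ a' _ h => he h]
  simp only [hfiber]

lemma entropy_prod_comm (X : Ω → α) (Y : Ω → β) :
    entropy μ (fun ω => (X ω, Y ω)) = entropy μ (fun ω => (Y ω, X ω)) :=
  entropy_comp_of_injective μ (fun ω => (Y ω, X ω)) Prod.swap_injective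

lemma mutualInfo_comp_left_of_injective (X : Ω → α) (Y : Ω → γ) {e : α → β}
    (he : Function.Injective e) :
    mutualInfo μ (fun ω => e (X ω)) Y = mutualInfo μ X Y := by
  have hXY : entropy μ (fun ω => (e (X ω), Y ω)) = entropy μ (fun ω => (X ω, Y ω)) :=
    entropy_comp_of_injective μ (fun ω => (X ω, Y ω)) (he.prodMap Function.injective_id)
  simp only [mutualInfo, condEntropy, entropy_comp_of_injective μ X he, hXY]

lemma mutualInfo_prod_left (X : Ω → α) (Z : Ω → β) (Y : Ω → γ) :
    mutualInfo μ (fun ω => (X ω, Z ω)) Y = mutualInfo μ X Y + condMutualInfo μ Z Y X := by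
  have hXZY : entropy μ (fun ω => ((X ω, Z ω), Y ω)) = entropy μ (fun ω => (Z ω, Y ω, X ω)) :=
    entropy_comp_of_injective μ (fun ω => (Z ω, Y ω, X ω))
      (e := fun s => ((s.2.2, s.1), s.2.1)) fun _ _ h => by simp_all [Prod.ext_iff]
  simp only [mutualInfo, condMutualInfo, condEntropy, hXZY, entropy_prod_comm μ X Z,
    entropy_prod_comm μ X Y]
  ring

lemma mutualInfo_eq_of_condMutualInfo_eq_zero (X : Ω → α) (Z : Ω → β) (Y : Ω → γ)
    (hZ : condMutualInfo μ Z Y X = 0) (hX : condMutualInfo μ X Y Z = 0) :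
    mutualInfo μ Z Y = mutualInfo μ X Y := by
  have h := mutualInfo_prod_left μ Z X Y
  rw [← mutualInfo_comp_left_of_injective μ _ Y Prod.swap_injective] at h
  simpa [mutualInfo_prod_left, hZ, hX] using h.symm

end Identities

lemma sub_le_mul_log_sub_mul_log {p q : ℝ} (hp : 0 ≤ p) (hq : 0 ≤ q) (hpq : 0 < p → 0 < q) :
    p - q ≤ p * log p - p * log q := by
  rcases hp.eq_or_lt with rfl | hp
  · simpa using hq
  · have hq := hpq hp
    have h := mul_le_mul_of_nonneg_left (log_le_sub_one_of_pos (div_pos hq hp)) hp.le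
    rw [log_div hq.ne' hp.ne', mul_sub, mul_sub, mul_div_cancel₀ _ hp.ne'] at h
    linarith

lemma sum_mul_log_marginals_le {α β : Type*} [Fintype α] [Fintype β] (q : α → β → ℝ)
    (hq : ∀ a b, 0 ≤ q a b) :
    ∑ a, (∑ b, q a b) * log (∑ b, q a b) + ∑ b, (∑ a, q a b) * log (∑ a, q a b) ≤
      ∑ a, ∑ b, q a b * log (q a b) + (∑ a, ∑ b, q a b) * log (∑ a, ∑ b, q a b) := by
  set qα : α → ℝ := fun a => ∑ b, q a b
  set qβ : β → ℝ := fun b => ∑ a, q a b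
  set P := ∑ a, qα a
  have hP : ∑ b, qβ b = P := sum_comm
  have hqα : ∀ a b, q a b ≤ qα a := fun a b =>
    single_le_sum (fun b _ => hq a b) (mem_univ b)
  have hqβ : ∀ a b, q a b ≤ qβ b := fun a b =>
    single_le_sum (fun a _ => hq a b) (mem_univ a)
  have hqP : ∀ a, qα a ≤ P := fun a =>
    single_le_sum (fun a _ => sum_nonneg fun b _ => hq a b) (mem_univ a)
  -- Gibbs' inequality against the product of the marginals `qα a * qβ b / P`
  have hgibbs : ∀ a b, q a b - qα a * qβ b / P ≤
      q a b * log (q a b) - (q a b * log (qα a) + q a b * log (qβ b) - q a b * log P) := by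
    intro a b
    rcases (hq a b).eq_or_lt with h0 | hpos
    · have : 0 ≤ qα a * qβ b / P :=
        div_nonneg (mul_nonneg ((hq a b).trans (hqα a b)) ((hq a b).trans (hqβ a b)))
          ((hq a b).trans ((hqα a b).trans (hqP a)))
      rw [← h0]
      linarith
    · have hα := hpos.trans_le (hqα a b)
      have hβ := hpos.trans_le (hqβ a b)
      have hP := hα.trans_le (hqP a)
      have h := sub_le_mul_log_sub_mul_log (q := qα a * qβ b / P) (hq a b) (by positivity)
        fun _ => by positivity
      rwa [log_div (by positivity) hP.ne', log_mul hα.ne' hβ.ne', mul_sub, mul_add] at h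
  have hsum := sum_le_sum fun a (_ : a ∈ univ) => sum_le_sum fun b (_ : b ∈ univ) => hgibbs a b
  have hQ : ∑ a, ∑ b, qα a * qβ b / P = P := by
    simp only [mul_div_assoc, ← mul_sum, ← sum_mul, ← sum_div, hP]
    rw [← mul_div_assoc]
    exact mul_self_div_self P
  simp only [sum_sub_distrib, sum_add_distrib, hQ, ← sum_mul] at hsum
  rw [sum_comm (f := fun a b => q a b * log (qβ b))] at hsum
  simp only [← sum_mul] at hsum
  linarith

section Measure

variable {Ω α β γ : Type*} [MeasurableSpace Ω] (μ : Measure Ω) [IsFiniteMeasure μ]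
  [Fintype α] [MeasurableSpace α] [MeasurableSingletonClass α]
  [Fintype β] [MeasurableSpace β] [MeasurableSingletonClass β]
  [Fintype γ] [MeasurableSpace γ] [MeasurableSingletonClass γ]

omit [Fintype α] in
lemma measureReal_preimage_eq_sum_prod {X : Ω → α} {Y : Ω → β} (hX : Measurable X)
    (hY : Measurable Y) (a : α) :
    μ.real (X ⁻¹' {a}) = ∑ b, μ.real ((fun ω => (X ω, Y ω)) ⁻¹' {(a, b)}) := by
  have hfiber : X ⁻¹' {a} = (fun ω => (X ω, Y ω)) ⁻¹' ↑({a} ×ˢ (univ : Finset β)) := by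
    ext ω; simp [eq_comm]
  rw [hfiber, ← sum_measureReal_preimage_singleton _
    fun _ _ => (hX.prodMk hY) (measurableSet_singleton _), sum_product, sum_singleton]

lemma entropy_prod_add_entropy_le {W : Ω → γ} {X : Ω → α} {Y : Ω → β} (hW : Measurable W)
    (hX : Measurable X) (hY : Measurable Y) :
    entropy μ (fun ω => (W ω, X ω, Y ω)) + entropy μ W ≤
      entropy μ (fun ω => (W ω, X ω)) + entropy μ (fun ω => (W ω, Y ω)) := by
  set p : γ → α → β → ℝ := fun c a b => μ.real ((fun ω => (W ω, X ω, Y ω)) ⁻¹' {(c, a, b)})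
  have hWX : ∀ c a, μ.real ((fun ω => (W ω, X ω)) ⁻¹' {(c, a)}) = ∑ b, p c a b := by
    intro c a
    rw [measureReal_preimage_eq_sum_prod μ (hW.prodMk hX) hY]
    congr! 2 with b
    ext ω; simp [and_assoc]
  have hWY : ∀ c b, μ.real ((fun ω => (W ω, Y ω)) ⁻¹' {(c, b)}) = ∑ a, p c a b := by
    intro c b
    rw [measureReal_preimage_eq_sum_prod μ (hW.prodMk hY) hX]
    congr! 2 with a
    ext ω; simp [and_assoc, and_comm]
  have hW' : ∀ c, μ.real (W ⁻¹' {c}) = ∑ a, ∑ b, p c a b := by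
    intro c
    simp only [measureReal_preimage_eq_sum_prod μ hW hX c, hWX]
  have h := sum_le_sum fun c (_ : c ∈ univ) =>
    sum_mul_log_marginals_le (p c) fun a b => measureReal_nonneg
  simp only [sum_add_distrib] at h
  simp only [entropy, ← measureReal_def, Fintype.sum_prod_type, hWX, hWY, hW']
  linarith

lemma condMutualInfo_nonneg {X : Ω → α} {Y : Ω → β} {W : Ω → γ} (hX : Measurable X)
    (hY : Measurable Y) (hW : Measurable W) : 0 ≤ condMutualInfo μ X Y W := by
  have hXYW : entropy μ (fun ω => (X ω, Y ω, W ω)) = entropy μ (fun ω => (W ω, X ω, Y ω)) :=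
    entropy_comp_of_injective μ (fun ω => (W ω, X ω, Y ω))
      (e := fun s => (s.2.1, s.2.2, s.1)) fun _ _ h => by simp_all [Prod.ext_iff]
  have h := entropy_prod_add_entropy_le μ hW hX hY
  simp only [condMutualInfo, condEntropy, hXYW, entropy_prod_comm μ X W, entropy_prod_comm μ Y W]
  linarith

end Measure

theorem tve_z1_better_general
    {Ω : Type*} [MeasurableSpace Ω] (μ : Measure Ω) [IsProbabilityMeasure μ]
    {A T B C D : Type*}
    [Fintype A] [MeasurableSpace A] [MeasurableSingletonClass A]
    [Fintype T] [MeasurableSpace T] [MeasurableSingletonClass T]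
    [Fintype B] [MeasurableSpace B] [MeasurableSingletonClass B]
    [Fintype C] [MeasurableSpace C]
    [Fintype D] [MeasurableSpace D]
    (x : Ω → A) (t : Ω → T) (y : Ω → B) (z₁ : Ω → C) (z₂ : Ω → D)
    (hx : Measurable x) (ht : Measurable t) (hy : Measurable y)
    (hz₁rep : condMutualInfo μ z₁ y (fun ω => (x ω, t ω)) = 0)
    (hz₁suff : condMutualInfo μ (fun ω => (x ω, t ω)) y z₁ = 0)
    (hz₂rep : condMutualInfo μ z₂ y x = 0)
    (hz₂suff : condMutualInfo μ x y z₂ = 0) :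
    mutualInfo μ z₁ y ≥ mutualInfo μ z₂ y := by
  calc mutualInfo μ z₂ y
      = mutualInfo μ x y := mutualInfo_eq_of_condMutualInfo_eq_zero μ x z₂ y hz₂rep hz₂suff
    _ ≤ mutualInfo μ (fun ω => (x ω, t ω)) y := by
        rw [mutualInfo_prod_left]
        linarith [condMutualInfo_nonneg μ ht hy hx]
    _ = mutualInfo μ z₁ y :=
        (mutualInfo_eq_of_condMutualInfo_eq_zero μ _ z₁ y hz₁rep hz₁suff).symm

theorem tve_z1_better
    {Ω : Type*} [MeasurableSpace Ω] (μ : Measure Ω) [IsProbabilityMeasure μ]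
    {A T B C D : Type*}
    [Fintype A] [MeasurableSpace A] [MeasurableSingletonClass A]
    [Fintype T] [MeasurableSpace T] [MeasurableSingletonClass T]
    [Fintype B] [MeasurableSpace B] [MeasurableSingletonClass B]
    [Fintype C] [MeasurableSpace C] [MeasurableSingletonClass C]
    [Fintype D] [MeasurableSpace D] [MeasurableSingletonClass D]
    (x : Ω → A) (t : Ω → T) (y : Ω → B) (z₁ : Ω → C) (z₂ : Ω → D)
    (hx : Measurable x) (ht : Measurable t) (hy : Measurable y)
    (hz₁ : Measurable z₁) (hz₂ : Measurable z₂)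
    (hz₁rep : condMutualInfo μ z₁ y (fun ω => (x ω, t ω)) = 0)
    (hz₁suff : condMutualInfo μ (fun ω => (x ω, t ω)) y z₁ = 0)
    (hz₂rep : condMutualInfo μ z₂ y x = 0)
    (hz₂suff : condMutualInfo μ x y z₂ = 0) :
    mutualInfo μ z₁ y ≥ mutualInfo μ z₂ y :=
  tve_z1_better_general μ x t y z₁ z₂ hx ht hy hz₁rep hz₁suff hz₂rep hz₂suff
end

section
/- Let x, t, y, z₁ be random variables with finite ranges on a probability space, with joint distribution p(x,t,y). Assume z₁ is a representation of (x,t), i.e. I(z₁; y | x,t) = 0. Then z₁ is a sufficient representation of x and t for y (i.e. I((x,t); y | z₁) = 0) if and only if I((x,t); y) = I(y; z₁). -/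
open MeasureTheory ProbabilityTheory

lemma entropy_comp_equiv {Ω : Type*} [MeasurableSpace Ω] (μ : Measure Ω)
    {α β : Type*} [Fintype α] [MeasurableSpace α] [Fintype β] [MeasurableSpace β]
    (e : α ≃ β) (X : Ω → α) :
    entropy μ (fun ω => e (X ω)) = entropy μ X := by
  unfold entropy
  congr 1
  rw [← Equiv.sum_comp e]
  apply Finset.sum_congr rfl
  intro a _
  have : (fun ω => e (X ω)) ⁻¹' {e a} = X ⁻¹' {a} := by
    ext ω
    simp [e.injective.eq_iff]
  rw [this]

theorem sufficiency_iff_side_channel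
    {Ω : Type*} [MeasurableSpace Ω] (μ : Measure Ω) [IsProbabilityMeasure μ]
    {A T B C : Type*}
    [Fintype A] [MeasurableSpace A] [MeasurableSingletonClass A]
    [Fintype T] [MeasurableSpace T] [MeasurableSingletonClass T]
    [Fintype B] [MeasurableSpace B] [MeasurableSingletonClass B]
    [Fintype C] [MeasurableSpace C] [MeasurableSingletonClass C]
    (x : Ω → A) (t : Ω → T) (y : Ω → B) (z₁ : Ω → C)
    (hx : Measurable x) (ht : Measurable t) (hy : Measurable y)
    (hz₁ : Measurable z₁)
    (hz₁rep : condMutualInfo μ z₁ y (fun ω => (x ω, t ω)) = 0) :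
    condMutualInfo μ (fun ω => (x ω, t ω)) y z₁ = 0 ↔
      mutualInfo μ (fun ω => (x ω, t ω)) y = mutualInfo μ y z₁ := by
  have h1 : entropy μ (fun ω => ((x ω, t ω), z₁ ω)) = entropy μ (fun ω => (z₁ ω, (x ω, t ω))) := by
    rw [← entropy_comp_equiv μ (Equiv.prodComm _ _) (fun ω => ((x ω, t ω), z₁ ω))]
    rfl
  have h3 : entropy μ (fun ω => ((x ω, t ω), y ω)) = entropy μ (fun ω => (y ω, (x ω, t ω))) := by
    rw [← entropy_comp_equiv μ (Equiv.prodComm _ _) (fun ω => ((x ω, t ω), y ω))]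
    rfl
  have h2 : entropy μ (fun ω => ((x ω, t ω), (y ω, z₁ ω)))
      = entropy μ (fun ω => (z₁ ω, (y ω, (x ω, t ω)))) := by
    rw [← entropy_comp_equiv μ
      (⟨fun p => (p.2.2, (p.2.1, p.1)), fun p => (p.2.2, (p.2.1, p.1)),
        fun p => rfl, fun p => rfl⟩ : ((A × T) × (B × C)) ≃ (C × (B × (A × T)))) (fun ω => ((x ω, t ω), (y ω, z₁ ω)))]
    rfl
  simp only [condMutualInfo, mutualInfo, condEntropy] at *
  constructor <;> intro h <;> linarith
end

section
/- Let x, t, y, z₁ be random variables with finite ranges on a probability space, with joint distribution p(x,t,y). Assume z₁ is a representation of (x,t), i.e. I(z₁; y | x,t) = 0, and z₁ is a sufficient latent representation of x with additional side-channel information t for y, i.e. I((x,t); y | z₁) = 0. Then I(z₁; y) ≥ I(x; y). -/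
open MeasureTheory ProbabilityTheory

section helpers
variable {Ω : Type*} [MeasurableSpace Ω] (μ : Measure Ω)

lemma entropy_comp_inj {α β : Type*} [Fintype α] [MeasurableSpace α]
    [Fintype β] [MeasurableSpace β]
    (X : Ω → α) (f : α → β) (hf : Function.Injective f) :
    entropy μ (fun ω => f (X ω)) = entropy μ X := by
  classical
  have hzero : ∀ b ∈ Finset.univ, b ∉ Finset.univ.image f →
      (μ ((fun ω => f (X ω)) ⁻¹' {b})).toReal *
        Real.log (μ ((fun ω => f (X ω)) ⁻¹' {b})).toReal = 0 := by
    intro b _ hb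
    have : (fun ω => f (X ω)) ⁻¹' {b} = ∅ := by
      ext ω
      simp only [Set.mem_preimage, Set.mem_singleton_iff, Set.mem_empty_iff_false, iff_false]
      intro h
      exact hb (Finset.mem_image.2 ⟨X ω, Finset.mem_univ _, h⟩)
    simp [this]
  unfold entropy
  congr 1
  rw [← Finset.sum_subset (Finset.subset_univ (Finset.univ.image f)) hzero,
      Finset.sum_image (fun a _ b _ h => hf h)]
  refine Finset.sum_congr rfl fun a _ => ?_
  have hpre : (fun ω => f (X ω)) ⁻¹' {f a} = X ⁻¹' {a} := by
    ext ω; simp [hf.eq_iff]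
  rw [hpre]

variable [IsProbabilityMeasure μ]

lemma measure_comp_eq_sum {S α : Type*} [Fintype S] [MeasurableSpace S]
    [MeasurableSingletonClass S] [DecidableEq α]
    {W : Ω → S} (hW : Measurable W) (φ : S → α) (a : α) :
    (μ ((fun ω => φ (W ω)) ⁻¹' {a})).toReal
      = ∑ v ∈ Finset.univ.filter (fun v => φ v = a), (μ (W ⁻¹' {v})).toReal := by
  have hset : (fun ω => φ (W ω)) ⁻¹' {a}
      = ⋃ v ∈ Finset.univ.filter (fun v => φ v = a), W ⁻¹' {v} := by
    ext ω
    simp only [Set.mem_preimage, Set.mem_singleton_iff, Set.mem_iUnion, Finset.mem_filter,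
      Finset.mem_univ, true_and]
    exact ⟨fun h => ⟨W ω, h, rfl⟩, fun ⟨v, hv, h⟩ => h ▸ hv⟩
  rw [hset, measure_biUnion_finset, ENNReal.toReal_sum (fun v _ => measure_ne_top μ _)]
  · intro v _ w _ hvw
    exact Set.disjoint_iff.2 fun ω ⟨h1, h2⟩ => hvw (by
      simp only [Set.mem_preimage, Set.mem_singleton_iff] at h1 h2; rw [← h1, ← h2])
  · exact fun v _ => hW (measurableSet_singleton v)

lemma entropy_comp_eq {S α : Type*} [Fintype S] [MeasurableSpace S]
    [MeasurableSingletonClass S] [Fintype α] [MeasurableSpace α]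
    {W : Ω → S} (hW : Measurable W) (φ : S → α) :
    entropy μ (fun ω => φ (W ω))
      = -∑ v : S, (μ (W ⁻¹' {v})).toReal *
          Real.log ((μ ((fun ω => φ (W ω)) ⁻¹' {φ v})).toReal) := by
  classical
  unfold entropy
  congr 1
  rw [← Finset.sum_fiberwise Finset.univ φ
    (fun v => (μ (W ⁻¹' {v})).toReal *
      Real.log ((μ ((fun ω => φ (W ω)) ⁻¹' {φ v})).toReal))]
  refine Finset.sum_congr rfl fun a _ => ?_
  nth_rewrite 1 [measure_comp_eq_sum μ hW φ a]
  rw [Finset.sum_mul]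
  refine Finset.sum_congr rfl fun v hv => ?_
  rw [(Finset.mem_filter.1 hv).2]

lemma sum_measure_preimage {S : Type*} [Fintype S] [MeasurableSpace S]
    [MeasurableSingletonClass S] {W : Ω → S} (hW : Measurable W) :
    ∑ v : S, (μ (W ⁻¹' {v})).toReal = 1 := by
  classical
  have h := measure_comp_eq_sum μ hW (fun _ => ()) ()
  simpa using h.symm

lemma measure_preimage_le {S α : Type*} (W : Ω → S) (φ : S → α) (v : S) :
    (μ (W ⁻¹' {v})).toReal ≤ (μ ((fun ω => φ (W ω)) ⁻¹' {φ v})).toReal := by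
  refine ENNReal.toReal_mono (measure_ne_top μ _) (measure_mono fun ω h => ?_)
  simp only [Set.mem_preimage, Set.mem_singleton_iff] at h ⊢
  rw [h]

end helpers
section key
variable {Ω : Type*} [MeasurableSpace Ω] (μ : Measure Ω) [IsProbabilityMeasure μ]

lemma sum_filter_fst {A T : Type*} [Fintype A] [Fintype T] [DecidableEq A]
    (f : A × T → ℝ) (a : A) :
    ∑ q ∈ Finset.univ.filter (fun q : A × T => q.1 = a), f q = ∑ s : T, f (a, s) := by
  rw [Finset.sum_filter, Fintype.sum_prod_type, Finset.sum_comm]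
  refine Finset.sum_congr rfl fun s _ => ?_
  simp [Finset.sum_ite_eq']

lemma key_ineq {A T B : Type*}
    [Fintype A] [MeasurableSpace A] [MeasurableSingletonClass A]
    [Fintype T] [MeasurableSpace T] [MeasurableSingletonClass T]
    [Fintype B] [MeasurableSpace B] [MeasurableSingletonClass B]
    (x : Ω → A) (t : Ω → T) (y : Ω → B)
    (hx : Measurable x) (ht : Measurable t) (hy : Measurable y) :
    entropy μ (fun ω => (x ω, t ω)) - entropy μ (fun ω => (y ω, (x ω, t ω)))
      ≥ entropy μ x - entropy μ (fun ω => (x ω, y ω)) := by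
  classical
  have hW : Measurable (fun ω => (x ω, t ω, y ω)) := hx.prodMk (ht.prodMk hy)
  have ex : entropy μ x
      = -∑ v : A × T × B, (μ ((fun ω => (x ω, t ω, y ω)) ⁻¹' {v})).toReal *
          Real.log ((μ (x ⁻¹' {v.1})).toReal) :=
    entropy_comp_eq μ hW Prod.fst
  have ext' : entropy μ (fun ω => (x ω, t ω))
      = -∑ v : A × T × B, (μ ((fun ω => (x ω, t ω, y ω)) ⁻¹' {v})).toReal *
          Real.log ((μ ((fun ω => (x ω, t ω)) ⁻¹' {(v.1, v.2.1)})).toReal) :=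
    entropy_comp_eq μ hW (fun v => (v.1, v.2.1))
  have exy : entropy μ (fun ω => (x ω, y ω))
      = -∑ v : A × T × B, (μ ((fun ω => (x ω, t ω, y ω)) ⁻¹' {v})).toReal *
          Real.log ((μ ((fun ω => (x ω, y ω)) ⁻¹' {(v.1, v.2.2)})).toReal) :=
    entropy_comp_eq μ hW (fun v => (v.1, v.2.2))
  have exty : entropy μ (fun ω => (y ω, (x ω, t ω)))
      = -∑ v : A × T × B, (μ ((fun ω => (x ω, t ω, y ω)) ⁻¹' {v})).toReal *
          Real.log ((μ ((fun ω => (x ω, t ω, y ω)) ⁻¹' {v})).toReal) := by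
    have h : entropy μ (fun ω => (y ω, (x ω, t ω)))
        = entropy μ (fun ω => (x ω, t ω, y ω)) :=
      entropy_comp_inj μ (fun ω => (x ω, t ω, y ω))
        (fun v => (v.2.2, (v.1, v.2.1)))
        (fun v w h => by
          simp only [Prod.mk.injEq] at h
          exact Prod.ext_iff.mpr ⟨h.2.1, Prod.ext_iff.mpr ⟨h.2.2, h.1⟩⟩)
    rw [h]; rfl
  -- key sum inequality
  have key : ∑ v : A × T × B, ((μ ((fun ω => (x ω, t ω, y ω)) ⁻¹' {v})).toReal *
        (Real.log ((μ ((fun ω => (x ω, t ω)) ⁻¹' {(v.1, v.2.1)})).toReal)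
         + Real.log ((μ ((fun ω => (x ω, y ω)) ⁻¹' {(v.1, v.2.2)})).toReal)
         - Real.log ((μ ((fun ω => (x ω, t ω, y ω)) ⁻¹' {v})).toReal)
         - Real.log ((μ (x ⁻¹' {v.1})).toReal))) ≤ 0 := by
    have step1 : ∀ v : A × T × B,
        (μ ((fun ω => (x ω, t ω, y ω)) ⁻¹' {v})).toReal *
          (Real.log ((μ ((fun ω => (x ω, t ω)) ⁻¹' {(v.1, v.2.1)})).toReal)
           + Real.log ((μ ((fun ω => (x ω, y ω)) ⁻¹' {(v.1, v.2.2)})).toReal)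
           - Real.log ((μ ((fun ω => (x ω, t ω, y ω)) ⁻¹' {v})).toReal)
           - Real.log ((μ (x ⁻¹' {v.1})).toReal))
        ≤ (if (μ (x ⁻¹' {v.1})).toReal = 0 then 0 else
            (μ ((fun ω => (x ω, t ω)) ⁻¹' {(v.1, v.2.1)})).toReal *
              (μ ((fun ω => (x ω, y ω)) ⁻¹' {(v.1, v.2.2)})).toReal /
              (μ (x ⁻¹' {v.1})).toReal)
          - (μ ((fun ω => (x ω, t ω, y ω)) ⁻¹' {v})).toReal := by
      intro v
      have hP0 : (0:ℝ) ≤ (μ ((fun ω => (x ω, t ω, y ω)) ⁻¹' {v})).toReal :=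
        ENNReal.toReal_nonneg
      have hle1 : (μ ((fun ω => (x ω, t ω, y ω)) ⁻¹' {v})).toReal
          ≤ (μ ((fun ω => (x ω, t ω)) ⁻¹' {(v.1, v.2.1)})).toReal :=
        measure_preimage_le μ (fun ω => (x ω, t ω, y ω)) (fun v => (v.1, v.2.1)) v
      have hle2 : (μ ((fun ω => (x ω, t ω, y ω)) ⁻¹' {v})).toReal
          ≤ (μ ((fun ω => (x ω, y ω)) ⁻¹' {(v.1, v.2.2)})).toReal :=
        measure_preimage_le μ (fun ω => (x ω, t ω, y ω)) (fun v => (v.1, v.2.2)) v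
      have hle3 : (μ ((fun ω => (x ω, t ω, y ω)) ⁻¹' {v})).toReal
          ≤ (μ (x ⁻¹' {v.1})).toReal :=
        measure_preimage_le μ (fun ω => (x ω, t ω, y ω)) Prod.fst v
      rcases eq_or_lt_of_le hP0 with h0 | h0
      · rw [← h0]
        split_ifs <;> simp <;> positivity
      · have h1 : 0 < (μ ((fun ω => (x ω, t ω)) ⁻¹' {(v.1, v.2.1)})).toReal :=
          lt_of_lt_of_le h0 hle1
        have h2 : 0 < (μ ((fun ω => (x ω, y ω)) ⁻¹' {(v.1, v.2.2)})).toReal :=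
          lt_of_lt_of_le h0 hle2
        have h3 : 0 < (μ (x ⁻¹' {v.1})).toReal := lt_of_lt_of_le h0 hle3
        rw [if_neg (ne_of_gt h3)]
        have hlog : Real.log ((μ ((fun ω => (x ω, t ω)) ⁻¹' {(v.1, v.2.1)})).toReal)
           + Real.log ((μ ((fun ω => (x ω, y ω)) ⁻¹' {(v.1, v.2.2)})).toReal)
           - Real.log ((μ ((fun ω => (x ω, t ω, y ω)) ⁻¹' {v})).toReal)
           - Real.log ((μ (x ⁻¹' {v.1})).toReal)
            = Real.log ((μ ((fun ω => (x ω, t ω)) ⁻¹' {(v.1, v.2.1)})).toReal *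
                (μ ((fun ω => (x ω, y ω)) ⁻¹' {(v.1, v.2.2)})).toReal /
                ((μ ((fun ω => (x ω, t ω, y ω)) ⁻¹' {v})).toReal *
                  (μ (x ⁻¹' {v.1})).toReal)) := by
          rw [Real.log_div (by positivity) (by positivity),
            Real.log_mul (ne_of_gt h1) (ne_of_gt h2),
            Real.log_mul (ne_of_gt h0) (ne_of_gt h3)]
          ring
        rw [hlog]
        have hq : (0:ℝ) < (μ ((fun ω => (x ω, t ω)) ⁻¹' {(v.1, v.2.1)})).toReal *
                (μ ((fun ω => (x ω, y ω)) ⁻¹' {(v.1, v.2.2)})).toReal /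
                ((μ ((fun ω => (x ω, t ω, y ω)) ⁻¹' {v})).toReal *
                  (μ (x ⁻¹' {v.1})).toReal) := by positivity
        have hlq := Real.log_le_sub_one_of_pos hq
        have hmul := mul_le_mul_of_nonneg_left hlq (le_of_lt h0)
        refine le_trans hmul (le_of_eq ?_)
        field_simp
    calc ∑ v : A × T × B, ((μ ((fun ω => (x ω, t ω, y ω)) ⁻¹' {v})).toReal *
        (Real.log ((μ ((fun ω => (x ω, t ω)) ⁻¹' {(v.1, v.2.1)})).toReal)
         + Real.log ((μ ((fun ω => (x ω, y ω)) ⁻¹' {(v.1, v.2.2)})).toReal)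
         - Real.log ((μ ((fun ω => (x ω, t ω, y ω)) ⁻¹' {v})).toReal)
         - Real.log ((μ (x ⁻¹' {v.1})).toReal)))
        ≤ ∑ v : A × T × B, ((if (μ (x ⁻¹' {v.1})).toReal = 0 then 0 else
            (μ ((fun ω => (x ω, t ω)) ⁻¹' {(v.1, v.2.1)})).toReal *
              (μ ((fun ω => (x ω, y ω)) ⁻¹' {(v.1, v.2.2)})).toReal /
              (μ (x ⁻¹' {v.1})).toReal)
          - (μ ((fun ω => (x ω, t ω, y ω)) ⁻¹' {v})).toReal) :=
        Finset.sum_le_sum (fun v _ => step1 v)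
      _ ≤ 0 := by
        rw [Finset.sum_sub_distrib, sum_measure_preimage μ hW]
        have hB : ∑ v : A × T × B, (if (μ (x ⁻¹' {v.1})).toReal = 0 then 0 else
            (μ ((fun ω => (x ω, t ω)) ⁻¹' {(v.1, v.2.1)})).toReal *
              (μ ((fun ω => (x ω, y ω)) ⁻¹' {(v.1, v.2.2)})).toReal /
              (μ (x ⁻¹' {v.1})).toReal) ≤ 1 := by
          have hsum := sum_measure_preimage μ hx
          rw [← hsum]
          simp only [Fintype.sum_prod_type]
          refine Finset.sum_le_sum fun a _ => ?_
          by_cases hpa : (μ (x ⁻¹' {a})).toReal = 0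
          · simp [hpa]
          · simp only [hpa, if_false]
            have hm1 : ∑ s : T, (μ ((fun ω => (x ω, t ω)) ⁻¹' {(a, s)})).toReal
                = (μ (x ⁻¹' {a})).toReal := by
              have h : (μ (x ⁻¹' {a})).toReal
                  = ∑ q ∈ Finset.univ.filter (fun q : A × T => q.1 = a),
                      (μ ((fun ω => (x ω, t ω)) ⁻¹' {q})).toReal :=
                measure_comp_eq_sum μ (hx.prodMk ht) Prod.fst a
              exact (sum_filter_fst
                (fun q : A × T => (μ ((fun ω => (x ω, t ω)) ⁻¹' {q})).toReal) a).symm.trans h.symm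
            have hm2 : ∑ b : B, (μ ((fun ω => (x ω, y ω)) ⁻¹' {(a, b)})).toReal
                = (μ (x ⁻¹' {a})).toReal := by
              have h : (μ (x ⁻¹' {a})).toReal
                  = ∑ q ∈ Finset.univ.filter (fun q : A × B => q.1 = a),
                      (μ ((fun ω => (x ω, y ω)) ⁻¹' {q})).toReal :=
                measure_comp_eq_sum μ (hx.prodMk hy) Prod.fst a
              exact (sum_filter_fst
                (fun q : A × B => (μ ((fun ω => (x ω, y ω)) ⁻¹' {q})).toReal) a).symm.trans h.symm
            have e : (∑ s : T, (μ ((fun ω => (x ω, t ω)) ⁻¹' {(a, s)})).toReal) *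
                (∑ b : B, (μ ((fun ω => (x ω, y ω)) ⁻¹' {(a, b)})).toReal) /
                (μ (x ⁻¹' {a})).toReal
                = ∑ s : T, ∑ b : B,
                    (μ ((fun ω => (x ω, t ω)) ⁻¹' {(a, s)})).toReal *
                      (μ ((fun ω => (x ω, y ω)) ⁻¹' {(a, b)})).toReal /
                      (μ (x ⁻¹' {a})).toReal := by
              rw [Finset.sum_mul_sum, Finset.sum_div]
              exact Finset.sum_congr rfl fun s _ => by rw [Finset.sum_div]
            rw [← e, hm1, hm2]
            rw [mul_div_assoc, div_self hpa, mul_one]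
        linarith
  -- conclude
  have hsplit : ∑ v : A × T × B, ((μ ((fun ω => (x ω, t ω, y ω)) ⁻¹' {v})).toReal *
        (Real.log ((μ ((fun ω => (x ω, t ω)) ⁻¹' {(v.1, v.2.1)})).toReal)
         + Real.log ((μ ((fun ω => (x ω, y ω)) ⁻¹' {(v.1, v.2.2)})).toReal)
         - Real.log ((μ ((fun ω => (x ω, t ω, y ω)) ⁻¹' {v})).toReal)
         - Real.log ((μ (x ⁻¹' {v.1})).toReal)))
      = (∑ v : A × T × B, (μ ((fun ω => (x ω, t ω, y ω)) ⁻¹' {v})).toReal *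
          Real.log ((μ ((fun ω => (x ω, t ω)) ⁻¹' {(v.1, v.2.1)})).toReal))
        + (∑ v : A × T × B, (μ ((fun ω => (x ω, t ω, y ω)) ⁻¹' {v})).toReal *
          Real.log ((μ ((fun ω => (x ω, y ω)) ⁻¹' {(v.1, v.2.2)})).toReal))
        - (∑ v : A × T × B, (μ ((fun ω => (x ω, t ω, y ω)) ⁻¹' {v})).toReal *
          Real.log ((μ ((fun ω => (x ω, t ω, y ω)) ⁻¹' {v})).toReal))
        - (∑ v : A × T × B, (μ ((fun ω => (x ω, t ω, y ω)) ⁻¹' {v})).toReal *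
          Real.log ((μ (x ⁻¹' {v.1})).toReal)) := by
    rw [← Finset.sum_add_distrib, ← Finset.sum_sub_distrib, ← Finset.sum_sub_distrib]
    exact Finset.sum_congr rfl fun v _ => by ring
  rw [hsplit] at key
  rw [ex, ext', exy, exty]
  linarith

end key

theorem sufficient_latent_contains_more
    {Ω : Type*} [MeasurableSpace Ω] (μ : Measure Ω) [IsProbabilityMeasure μ]
    {A T B C : Type*}
    [Fintype A] [MeasurableSpace A] [MeasurableSingletonClass A]
    [Fintype T] [MeasurableSpace T] [MeasurableSingletonClass T]
    [Fintype B] [MeasurableSpace B] [MeasurableSingletonClass B]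
    [Fintype C] [MeasurableSpace C] [MeasurableSingletonClass C]
    (x : Ω → A) (t : Ω → T) (y : Ω → B) (z₁ : Ω → C)
    (hx : Measurable x) (ht : Measurable t) (hy : Measurable y)
    (hz₁ : Measurable z₁)
    (hz₁rep : condMutualInfo μ z₁ y (fun ω => (x ω, t ω)) = 0)
    (hz₁suff : condMutualInfo μ (fun ω => (x ω, t ω)) y z₁ = 0) :
    mutualInfo μ z₁ y ≥ mutualInfo μ x y := by
  have E1 : entropy μ (fun ω => (z₁ ω, (x ω, t ω)))
      = entropy μ (fun ω => ((x ω, t ω), z₁ ω)) :=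
    entropy_comp_inj μ (fun ω => ((x ω, t ω), z₁ ω)) Prod.swap Prod.swap_injective
  have E2 : entropy μ (fun ω => (z₁ ω, (y ω, (x ω, t ω))))
      = entropy μ (fun ω => ((x ω, t ω), (y ω, z₁ ω))) :=
    entropy_comp_inj μ (fun ω => ((x ω, t ω), (y ω, z₁ ω)))
      (fun p => (p.2.2, (p.2.1, p.1)))
      (fun p q h => by
        simp only [Prod.mk.injEq] at h
        exact Prod.ext_iff.mpr ⟨h.2.2, Prod.ext_iff.mpr ⟨h.2.1, h.1⟩⟩)
  have E3 : entropy μ (fun ω => (z₁ ω, y ω)) = entropy μ (fun ω => (y ω, z₁ ω)) :=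
    entropy_comp_inj μ (fun ω => (y ω, z₁ ω)) Prod.swap Prod.swap_injective
  have KI := key_ineq μ x t y hx ht hy
  simp only [condMutualInfo, condEntropy] at hz₁rep hz₁suff
  simp only [ge_iff_le, mutualInfo, condEntropy]
  linarith
end
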